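/- arXiv:2305.04313 — 3 statements merged into one kernel-verified Lean document; each statement's English description precedes it below -/
import Mathlib

section
/- Let N, L, Q be positive integers with Q ≥ N + L - 1, and let (n₀, n₁, n₂) be (N, Q, L) sorted in nondecreasing order. Then for every integer r with 0 ≤ r ≤ n₀, one has [n₀ + n₁ - n₂ - r]⁺ ≤ 1, so that ⌊([n₀ + n₁ - n₂ - r]⁺)²/4⌋ = 0 and hence the DMT d(r) = (n₀ - r)(n₁ - r) depends only on min(N,L) and the middle order statistic. -/
/-!
Since `min N L ≥ 1`, the bound `Q ≥ N + L - 1` makes `Q` the largest of `N, Q, L`, so the sorted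
triple is `(min N L, max N L, Q)` and `n₀ + n₁ - n₂ = N + L - Q ≤ 1`. For `r ≥ 0` the correction
term is therefore the square of `0` or `1`, which is `< 4`.
-/

theorem Multiset.eq_min_max_of_pair_eq {α : Type*} [LinearOrder α] {x y a b : α}
    (h : ({x, y} : Multiset α) = {a, b}) (hxy : x ≤ y) : x = min a b ∧ y = max a b := by
  have hx : x ∈ ({a, b} : Multiset α) := h ▸ by simp
  have hy : y ∈ ({a, b} : Multiset α) := h ▸ by simp
  have ha : a ∈ ({x, y} : Multiset α) := h ▸ by simp
  have hb : b ∈ ({x, y} : Multiset α) := h ▸ by simp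
  simp only [Multiset.insert_eq_cons, Multiset.mem_cons, Multiset.mem_singleton] at hx hy ha hb
  grind

theorem Multiset.sorted_triple_eq_of_le {α : Type*} [LinearOrder α] {n₀ n₁ n₂ a b c : α}
    (h : ({n₀, n₁, n₂} : Multiset α) = {a, c, b}) (h01 : n₀ ≤ n₁) (h12 : n₁ ≤ n₂)
    (hac : a ≤ c) (hbc : b ≤ c) : n₀ = min a b ∧ n₁ = max a b ∧ n₂ = c := by
  have hn₂ : n₂ ∈ ({a, c, b} : Multiset α) := h ▸ by simp
  have hc : c ∈ ({n₀, n₁, n₂} : Multiset α) := h.symm ▸ by simp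
  simp only [Multiset.insert_eq_cons, Multiset.mem_cons, Multiset.mem_singleton] at hn₂ hc
  obtain rfl : n₂ = c := by grind
  have hpair : ({n₀, n₁} : Multiset α) = {a, b} := by
    rw [← Multiset.cons_inj_right n₂]
    calc n₂ ::ₘ {n₀, n₁} = {n₀, n₁, n₂} := by
          rw [Multiset.pair_comm n₁ n₂]; exact Multiset.cons_swap _ _ _
      _ = {a, n₂, b} := h
      _ = n₂ ::ₘ {a, b} := Multiset.cons_swap _ _ _
  obtain ⟨hn₀, hn₁⟩ := eq_min_max_of_pair_eq hpair h01
  exact ⟨hn₀, hn₁, rfl⟩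

theorem Int.sq_ediv_four_eq_zero {x : ℤ} (h₀ : 0 ≤ x) (h₁ : x ≤ 1) : x ^ 2 / 4 = 0 :=
  Int.ediv_eq_zero_of_lt (sq_nonneg x) (by nlinarith)

theorem dmt_reduces_to_NL_general (N L Q n₀ n₁ n₂ : ℤ) (hN : 1 ≤ N) (hL : 1 ≤ L)
    (hQ' : Q ≥ N + L - 1) (hperm : ({n₀, n₁, n₂} : Multiset ℤ) = {N, Q, L})
    (h1 : n₀ ≤ n₁) (h2 : n₁ ≤ n₂) :
    n₀ = min N L ∧
    ∀ r : ℤ, 0 ≤ r → r ≤ n₀ →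
      max 0 (n₀ + n₁ - n₂ - r) ≤ 1 ∧
      (max 0 (n₀ + n₁ - n₂ - r)) ^ 2 / 4 = 0 ∧
      (n₀ - r) * (n₁ - r) - (max 0 (n₀ + n₁ - n₂ - r)) ^ 2 / 4 = (n₀ - r) * (n₁ - r) := by
  obtain ⟨hn₀, hn₁, rfl⟩ :=
    Multiset.sorted_triple_eq_of_le hperm h1 h2 (by omega) (by omega)
  refine ⟨hn₀, fun r hr _ => ?_⟩
  have hsum : n₀ + n₁ = N + L := by rw [hn₀, hn₁, min_add_max]
  have hle : max 0 (n₀ + n₁ - n₂ - r) ≤ 1 := max_le zero_le_one (by omega)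
  have hzero := Int.sq_ediv_four_eq_zero (le_max_left _ _) hle
  exact ⟨hle, hzero, by rw [hzero, sub_zero]⟩

/-- if Q ≥ N + L - 1 and (n₀,n₁,n₂) is (N,Q,L) sorted nondecreasingly,
then for every 0 ≤ r ≤ n₀ the correction term vanishes, so the DMT equals
(n₀-r)(n₁-r); moreover n₀ = min N L. -/
theorem dmt_reduces_to_NL (N L Q n₀ n₁ n₂ : ℤ) (hN : 1 ≤ N) (hL : 1 ≤ L) (hQ : 1 ≤ Q)
    (hQ' : Q ≥ N + L - 1) (hperm : ({n₀, n₁, n₂} : Multiset ℤ) = {N, Q, L})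
    (h1 : n₀ ≤ n₁) (h2 : n₁ ≤ n₂) :
    n₀ = min N L ∧
    ∀ r : ℤ, 0 ≤ r → r ≤ n₀ →
      max 0 (n₀ + n₁ - n₂ - r) ≤ 1 ∧
      (max 0 (n₀ + n₁ - n₂ - r)) ^ 2 / 4 = 0 ∧
      (n₀ - r) * (n₁ - r) - (max 0 (n₀ + n₁ - n₂ - r)) ^ 2 / 4 = (n₀ - r) * (n₁ - r) :=
  dmt_reduces_to_NL_general N L Q n₀ n₁ n₂ hN hL hQ' hperm h1 h2
end

section
/- Suppose m is a positive integer satisfying min(N,L) ≤ m ≤ |N - L| + 1 (which requires min(N,L) ≤ |N-L| + 1), and Q = Km. Then the activate-reflect DMT d_AR(r) = K·d_PR^{(N,m,L)}(r) satisfies d_AR(0) = min(N,L)·Q (the maximum diversity of the cut-set bound), and the maximum multiplexing gain of each sub-channel is min(N, m, L) = min(N,L). -/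
/-- The pure-reflection DMT of the (N,m,L) channel at multiplexing gain r, evaluated on
the sorted triple (n₀,n₁,n₂) of (N,m,L):
d(r) = (n₀-r)(n₁-r) - ⌊([n₀+n₁-n₂-r]⁺)²/4⌋. -/
def dPR (N m L r : ℤ) : ℤ :=
  let n₀ := min N (min m L)
  let n₂ := max N (max m L)
  let n₁ := N + m + L - n₀ - n₂
  (n₀ - r) * (n₁ - r) - (max 0 (n₀ + n₁ - n₂ - r)) ^ 2 / 4

/-- if min(N,L) ≤ m ≤ |N-L|+1 and Q = Km, then the activate-reflect DMT
d_AR(r) = K·dPR(r) achieves d_AR(0) = min(N,L)·Q, and the maximum multiplexing gain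
of each sub-channel min(N,m,L) equals min(N,L). -/
theorem AR_achieves_cutset (N L K m Q : ℤ) (hN : 1 ≤ N) (hL : 1 ≤ L) (hK : 1 ≤ K)
    (hm1 : min N L ≤ m) (hm2 : m ≤ |N - L| + 1) (hQ : Q = K * m) :
    K * dPR N m L 0 = min N L * Q ∧ min N (min m L) = min N L := by
  subst hQ
  have habs : |N - L| = max N L - min N L := by
    rcases le_total N L with h | h
    · rw [abs_of_nonpos (by omega)]; omega
    · rw [abs_of_nonneg (by omega)]; omega
  rw [habs] at hm2
  unfold dPR
  simp only
  set n0 := min N (min m L) with hn0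
  set n2 := max N (max m L) with hn2
  have hn0v : n0 = min N L := by omega
  have hn2v : n2 = max N L := by omega
  have hn1 : N + m + L - n0 - n2 = m := by omega
  set t := max 0 (n0 + (N + m + L - n0 - n2) - n2 - 0) with ht
  have h1 : t = 0 ∨ t = 1 := by omega
  have h2 : t ^ 2 / 4 = 0 := by rcases h1 with h | h <;> simp [h]
  rw [h2, hn1, hn0v]
  exact ⟨by ring, rfl⟩
end

section
/- Let d_PR(r) = (n₀-r)(n₁-r) - ⌊([n₀+n₁-n₂-r]⁺)²/4⌋ where (n₀,n₁,n₂) is the sorted triple of (N,m,L), n₀ ≤ n₁ ≤ n₂. If m ≤ |N - L| + 1 then d_PR(0) = min(N,L)·m. -/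
theorem dPR_eq_of_le_max {N m L : ℤ} (r : ℤ) (h : m ≤ max N L) :
    dPR N m L r = (min N L - r) * (m - r) - (max 0 (min N L + m - max N L - r)) ^ 2 / 4 := by
  have hn₀ : min N (min m L) = min (min N L) m := by omega
  have hn₂ : max N (max m L) = max N L := by omega
  have hn₁ : N + m + L - min (min N L) m - max N L = max (min N L) m := by omega
  have hsum : min (min N L) m + max (min N L) m = min N L + m := min_add_max _ _
  simp only [dPR, hn₀, hn₂, hn₁, hsum]
  rw [← min_sub_sub_right, ← max_sub_sub_right, min_mul_max]

theorem Int.sq_max_zero_div_four_eq_zero {t : ℤ} (ht : t ≤ 1) : max 0 t ^ 2 / 4 = 0 := by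
  have h₀ : 0 ≤ max 0 t := le_max_left _ _
  have h₁ : max 0 t ≤ 1 := max_le zero_le_one ht
  exact Int.ediv_eq_zero_of_lt (sq_nonneg _) (by nlinarith)

theorem full_diversity_subchannel_general (N L m : ℤ) (hN : 1 ≤ N) (hL : 1 ≤ L)
    (hm2 : m ≤ |N - L| + 1) :
    dPR N m L 0 = min N L * m := by
  have hgap : m ≤ max N L - min N L + 1 := by rwa [max_sub_min_eq_abs, abs_sub_comm]
  have hmin : 1 ≤ min N L := le_min hN hL
  rw [dPR_eq_of_le_max 0 (by omega), Int.sq_max_zero_div_four_eq_zero (by omega)]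
  ring

/-- if m ≤ |N - L| + 1 then d_PR(0) = min(N,L)·m. -/
theorem full_diversity_subchannel (N L m : ℤ) (hN : 1 ≤ N) (hL : 1 ≤ L) (hm : 1 ≤ m)
    (hm2 : m ≤ |N - L| + 1) :
    dPR N m L 0 = min N L * m :=
  full_diversity_subchannel_general N L m hN hL hm2
end
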